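/- Let n ∈ ℕ and let x, y ∈ ℝ^{n+1} both lie on the Lorentz hyperboloid L^n_{−1} of curvature K = −1 (i.e. ⟨x,x⟩_L = ⟨y,y⟩_L = −1 and x₀, y₀ > 0), with x ≠ y. Let u := log_x(y) = arcosh(−⟨x,y⟩_L)·(y + ⟨x,y⟩_L x)/√(⟨y + ⟨x,y⟩_L x, y + ⟨x,y⟩_L x⟩_L) and exp_x(v) := cosh(‖v‖_L)·x + sinh(‖v‖_L)·v/‖v‖_L for spacelike v, where ‖v‖_L = √(⟨v,v⟩_L). Then exp_x(log_x(y)) = y. -/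

import Mathlib

/-- The Lorentzian scalar product on `ℝ^{n+1}`:
`⟨x,y⟩_L = -x₀y₀ + ∑_{i=1}^n x_i y_i`. -/
def lprod {n : ℕ} (x y : Fin (n + 1) → ℝ) : ℝ :=
  -(x 0 * y 0) + ∑ i : Fin n, x i.succ * y i.succ

/-- The inverse hyperbolic cosine: `arcosh t = log (t + √(t² − 1))`,
the inverse of `cosh` on `[1, ∞)`. -/
noncomputable def arcosh (t : ℝ) : ℝ :=
  Real.log (t + Real.sqrt (t ^ 2 - 1))

/-!
On the upper sheet, the reversed Cauchy–Schwarz inequality gives `c := -⟨x,y⟩_L > 1` for `x ≠ y`.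
The vector `w = y - c x` is Lorentz-orthogonal to `x` with `⟨w,w⟩_L = c² - 1`, so `u` has Lorentz
length `arcosh c`, and `exp_x u = cosh (arcosh c) x + sinh (arcosh c) w / √(c² - 1) = c x + w = y`.
-/

theorem arcosh_eq_real_arcosh (t : ℝ) : arcosh t = Real.arcosh t := rfl

def hyperboloid (n : ℕ) : Set (Fin (n + 1) → ℝ) := {x | lprod x x = -1 ∧ 0 < x 0}

section Lorentz

variable {n : ℕ}

theorem lprod_eq_dotProduct_tail (x y : Fin (n + 1) → ℝ) :
    lprod x y = -(x 0 * y 0) + Fin.tail x ⬝ᵥ Fin.tail y := rfl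

theorem lprod_comm (x y : Fin (n + 1) → ℝ) : lprod x y = lprod y x := by
  simp only [lprod_eq_dotProduct_tail, mul_comm (x 0), dotProduct_comm (Fin.tail x)]

theorem lprod_add_left (x y z : Fin (n + 1) → ℝ) : lprod (x + y) z = lprod x z + lprod y z := by
  simp only [lprod, Pi.add_apply, add_mul, Finset.sum_add_distrib]
  ring

theorem lprod_add_right (x y z : Fin (n + 1) → ℝ) : lprod x (y + z) = lprod x y + lprod x z := by
  rw [lprod_comm, lprod_add_left, lprod_comm y, lprod_comm z]

theorem lprod_smul_left (t : ℝ) (x y : Fin (n + 1) → ℝ) : lprod (t • x) y = t * lprod x y := by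
  simp only [lprod, Pi.smul_apply, smul_eq_mul, mul_assoc, ← Finset.mul_sum]
  ring

theorem lprod_smul_right (t : ℝ) (x y : Fin (n + 1) → ℝ) : lprod x (t • y) = t * lprod x y := by
  rw [lprod_comm, lprod_smul_left, lprod_comm]

theorem sqrt_lprod_smul_self {t : ℝ} (ht : 0 ≤ t) (v : Fin (n + 1) → ℝ) :
    √(lprod (t • v) (t • v)) = t * √(lprod v v) := by
  rw [lprod_smul_left, lprod_smul_right, ← mul_assoc, ← sq, Real.sqrt_mul (sq_nonneg t),
    Real.sqrt_sq ht]

theorem dotProduct_sq_le_dotProduct_self_mul {m : ℕ} (a b : Fin m → ℝ) :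
    (a ⬝ᵥ b) ^ 2 ≤ (a ⬝ᵥ a) * (b ⬝ᵥ b) := by
  simpa only [dotProduct, sq] using Finset.sum_mul_sq_le_sq_mul_sq Finset.univ a b

theorem sq_head_of_mem_hyperboloid {x : Fin (n + 1) → ℝ} (hx : x ∈ hyperboloid n) :
    x 0 ^ 2 = 1 + Fin.tail x ⬝ᵥ Fin.tail x := by
  have h := hx.1
  rw [lprod_eq_dotProduct_tail] at h
  linarith

theorem tail_injOn_hyperboloid :
    Set.InjOn (Fin.tail : (Fin (n + 1) → ℝ) → Fin n → ℝ) (hyperboloid n) := by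
  intro x hx y hy h
  have h0 : x 0 = y 0 := by
    rw [← sq_eq_sq₀ hx.2.le hy.2.le, sq_head_of_mem_hyperboloid hx,
      sq_head_of_mem_hyperboloid hy, h]
  rw [← Fin.cons_self_tail x, ← Fin.cons_self_tail y, h0, h]

theorem lprod_lt_neg_one_of_mem_hyperboloid {x y : Fin (n + 1) → ℝ} (hx : x ∈ hyperboloid n)
    (hy : y ∈ hyperboloid n) (hxy : x ≠ y) : lprod x y < -1 := by
  set a := Fin.tail x
  set b := Fin.tail y
  have hab : 0 < (a - b) ⬝ᵥ (a - b) := by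
    refine lt_of_le_of_ne (Finset.sum_nonneg fun i _ ↦ mul_self_nonneg _) (Ne.symm ?_)
    rw [ne_eq, dotProduct_self_eq_zero, sub_eq_zero]
    exact fun h ↦ hxy (tail_injOn_hyperboloid hx hy h)
  simp only [sub_dotProduct, dotProduct_sub, dotProduct_comm b a] at hab
  have hcs := dotProduct_sq_le_dotProduct_self_mul a b
  have hsq : (1 + a ⬝ᵥ b) ^ 2 < (x 0 * y 0) ^ 2 := by
    rw [mul_pow, sq_head_of_mem_hyperboloid hx, sq_head_of_mem_hyperboloid hy]
    nlinarith
  have := lt_of_pow_lt_pow_left₀ 2 (mul_pos hx.2 hy.2).le hsq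
  rw [lprod_eq_dotProduct_tail]
  linarith

end Lorentz

/-- On the hyperboloid of curvature `−1`, the exponential map inverts the
logarithmic map: for distinct `x, y ∈ L^n_{−1}`, with
`u = log_x(y) = arcosh(−⟨x,y⟩_L)·(y + ⟨x,y⟩_L·x)/√(⟨y + ⟨x,y⟩_L·x, y + ⟨x,y⟩_L·x⟩_L)`
and `exp_x(v) = cosh(‖v‖_L)·x + sinh(‖v‖_L)·v/‖v‖_L` (`‖v‖_L = √(⟨v,v⟩_L)`),
one has `exp_x(log_x(y)) = y`. -/
theorem exp_log_inverse_on_hyperboloid (n : ℕ)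
    (x y : Fin (n + 1) → ℝ)
    (hx : lprod x x = -1) (hx0 : x 0 > 0)
    (hy : lprod y y = -1) (hy0 : y 0 > 0) (hxy : x ≠ y)
    (w : Fin (n + 1) → ℝ) (hw : w = y + (lprod x y) • x)
    (u : Fin (n + 1) → ℝ)
    (hu : u = (arcosh (-(lprod x y)) / Real.sqrt (lprod w w)) • w) :
    (fun i => Real.cosh (Real.sqrt (lprod u u)) * x i +
      Real.sinh (Real.sqrt (lprod u u)) * u i / Real.sqrt (lprod u u)) = y := by
  have hlt := lprod_lt_neg_one_of_mem_hyperboloid ⟨hx, hx0⟩ ⟨hy, hy0⟩ hxy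
  rw [arcosh_eq_real_arcosh] at hu
  set c := -lprod x y with hc
  have hc1 : 1 < c := by linarith
  have hww : lprod w w = c ^ 2 - 1 := by
    rw [hw, lprod_add_left, lprod_add_right, lprod_add_right, lprod_smul_left, lprod_smul_right,
      lprod_smul_left, lprod_smul_right, lprod_comm y x, hx, hy]
    ring
  have hs : 0 < √(lprod w w) := Real.sqrt_pos.2 (by rw [hww]; nlinarith)
  have hL := Real.arcosh_pos hc1
  have huu : √(lprod u u) = Real.arcosh c := by
    rw [hu, sqrt_lprod_smul_self (div_nonneg hL.le hs.le), div_mul_cancel₀ _ hs.ne']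
  funext i
  have hwi : w i = y i - c * x i := by
    rw [hw, hc, Pi.add_apply, Pi.smul_apply, smul_eq_mul]
    ring
  rw [huu, Real.cosh_arcosh hc1.le, Real.sinh_arcosh hc1.le, ← hww, hu, Pi.smul_apply,
    smul_eq_mul, hwi]
  field_simp
  ring
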